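/- arXiv:math/0403103 — 4 statements merged into one kernel-verified Lean document; each statement's English description precedes it below -/
import Mathlib

section
/- Let $(\Omega,\mathsf{A},\mu)$ be a probability space, $1 \le p < \infty$, and let $f_1,\dots,f_n$ be independent real-valued random variables in $L_p(\mu)$. Then there exist universal constants $0 < c \le C$ (depending only on $p$, not on $n$ or the $f_k$) such that $c\, M \le \big( \int_\Omega \big[ \sum_{k=1}^n |f_k(\omega)| \big]^p \, d\mu(\omega) \big)^{1/p} \le C\, M$, where $M = \max\Big\{ \sum_{k=1}^n \int_\Omega |f_k| \, d\mu, \; \big( \sum_{k=1}^n \int_\Omega |f_k|^p \, d\mu \big)^{1/p} \Big\}$. -/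
open MeasureTheory ProbabilityTheory

/-!
Write `Xₖ = |fₖ|`, `S = ∑ Xₖ` and `Tₖ = S - Xₖ`. The lower bound holds with `c = 1` without
independence: `‖S‖_p ≥ ‖S‖_1 = ∑ 𝔼 Xₖ` on a probability space, and `∑ Xₖ ^ p ≤ S ^ p` pointwise.
For the upper bound, `S ^ p = ∑ Xₖ S ^ (p - 1) ≤ 2 ^ (p - 1) ∑ (Xₖ Tₖ ^ (p - 1) + Xₖ ^ p)`, and
independence of `Xₖ` from `Tₖ` gives `𝔼[Xₖ Tₖ ^ (p - 1)] = 𝔼 Xₖ · 𝔼 Tₖ ^ (p - 1) ≤ 𝔼 Xₖ · ‖S‖_p ^ (p - 1)`.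
Hence `‖S‖_p ^ p ≤ 2 ^ (p - 1) (M ‖S‖_p ^ (p - 1) + M ^ p)`, which forces `‖S‖_p ≤ 2 ^ p M`.
-/

open Finset

namespace Real

lemma add_rpow_le_two_rpow_mul_add_rpow {a b q : ℝ} (ha : 0 ≤ a) (hb : 0 ≤ b) (hq : 0 ≤ q) :
    (a + b) ^ q ≤ 2 ^ q * (a ^ q + b ^ q) := by
  have hmax : 0 ≤ max a b := le_max_of_le_left ha
  calc (a + b) ^ q ≤ (2 * max a b) ^ q := by
        gcongr
        linarith [le_max_left a b, le_max_right a b]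
    _ = 2 ^ q * max a b ^ q := mul_rpow zero_le_two hmax
    _ ≤ 2 ^ q * (a ^ q + b ^ q) := by
        gcongr
        rcases max_choice a b with h | h <;> rw [h]
        · linarith [rpow_nonneg hb q]
        · linarith [rpow_nonneg ha q]

lemma self_mul_rpow_sub_one {x p : ℝ} (hx : 0 ≤ x) (hp : p ≠ 0) : x * x ^ (p - 1) = x ^ p := by
  rw [← rpow_one_add' hx (by simpa using hp), add_sub_cancel]

lemma sum_rpow_le_rpow_sum {ι : Type*} (s : Finset ι) {x : ι → ℝ} (hx : ∀ i ∈ s, 0 ≤ x i)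
    {p : ℝ} (hp : 1 ≤ p) : ∑ i ∈ s, x i ^ p ≤ (∑ i ∈ s, x i) ^ p := by
  have hp0 : p ≠ 0 := by positivity
  calc ∑ i ∈ s, x i ^ p = ∑ i ∈ s, x i * x i ^ (p - 1) :=
        sum_congr rfl fun i hi => (self_mul_rpow_sub_one (hx i hi) hp0).symm
    _ ≤ ∑ i ∈ s, x i * (∑ j ∈ s, x j) ^ (p - 1) := sum_le_sum fun i hi =>
        mul_le_mul_of_nonneg_left
          (rpow_le_rpow (hx i hi) (single_le_sum hx hi) (by linarith)) (hx i hi)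
    _ = (∑ i ∈ s, x i) ^ p := by
        rw [← sum_mul, self_mul_rpow_sub_one (sum_nonneg hx) hp0]

lemma rpow_sum_le_two_rpow_mul_sum_erase {ι : Type*} [Fintype ι] [DecidableEq ι] {x : ι → ℝ}
    (hx : ∀ i, 0 ≤ x i) {p : ℝ} (hp : 1 ≤ p) :
    (∑ i, x i) ^ p ≤
      2 ^ (p - 1) * ∑ k, (x k * (∑ j ∈ univ.erase k, x j) ^ (p - 1) + x k ^ p) := by
  have hp0 : p ≠ 0 := by positivity
  rw [← self_mul_rpow_sub_one (sum_nonneg fun i _ => hx i) hp0, sum_mul, mul_sum]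
  refine sum_le_sum fun k _ => ?_
  have hrest : 0 ≤ ∑ j ∈ univ.erase k, x j := sum_nonneg fun j _ => hx j
  calc x k * (∑ i, x i) ^ (p - 1)
      = x k * (x k + ∑ j ∈ univ.erase k, x j) ^ (p - 1) := by rw [add_sum_erase _ _ (mem_univ k)]
    _ ≤ x k * (2 ^ (p - 1) * (x k ^ (p - 1) + (∑ j ∈ univ.erase k, x j) ^ (p - 1))) := by
        gcongr
        · exact hx k
        · exact add_rpow_le_two_rpow_mul_add_rpow (hx k) hrest (by linarith)
    _ = 2 ^ (p - 1) * (x k * (∑ j ∈ univ.erase k, x j) ^ (p - 1) + x k ^ p) := by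
        rw [← self_mul_rpow_sub_one (hx k) hp0]
        ring

lemma le_two_rpow_mul_max_of_rpow_le {A a B p : ℝ} (hp : 1 ≤ p) (hA : 0 ≤ A) (ha : 0 ≤ a)
    (hB : 0 ≤ B) (h : A ^ p ≤ 2 ^ (p - 1) * (a * A ^ (p - 1) + B)) :
    A ≤ 2 ^ p * max a (B ^ (1 / p)) := by
  set M := max a (B ^ (1 / p))
  have hp0 : p ≠ 0 := by positivity
  have hM : 0 ≤ M := le_max_of_le_left ha
  have h2p : (2 : ℝ) ^ p = 2 ^ (p - 1) * 2 := by
    rw [← rpow_add_one two_ne_zero, sub_add_cancel]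
  rcases le_or_gt A M with hAM | hMA
  · calc A ≤ 1 * M := by rwa [one_mul]
      _ ≤ 2 ^ p * M := by gcongr; exact one_le_rpow one_le_two (by linarith)
  have hBM : B ≤ M * M ^ (p - 1) := by
    rw [self_mul_rpow_sub_one hM hp0]
    calc B = (B ^ (1 / p)) ^ p := by rw [← rpow_mul hB, one_div_mul_cancel hp0, rpow_one]
      _ ≤ M ^ p := by gcongr; exact le_max_right _ _
  have hMA' : M * M ^ (p - 1) ≤ M * A ^ (p - 1) := by gcongr
  have hApos : 0 < A ^ (p - 1) := rpow_pos_of_pos (hM.trans_lt hMA) _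
  refine le_of_mul_le_mul_right ?_ hApos
  calc A * A ^ (p - 1) = A ^ p := self_mul_rpow_sub_one hA hp0
    _ ≤ 2 ^ (p - 1) * (a * A ^ (p - 1) + B) := h
    _ ≤ 2 ^ (p - 1) * (M * A ^ (p - 1) + M * A ^ (p - 1)) := by
        gcongr
        · exact le_max_left _ _
        · exact hBM.trans hMA'
    _ = 2 ^ p * M * A ^ (p - 1) := by rw [h2p]; ring

end Real

section Moments

variable {Ω : Type*} [MeasurableSpace Ω] {μ : Measure Ω} [IsProbabilityMeasure μ]
  {X : Ω → ℝ} {p r : ℝ}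

lemma MeasureTheory.MemLp.integrable_rpow_of_le (hX : MemLp X (ENNReal.ofReal p) μ)
    (hX0 : ∀ ω, 0 ≤ X ω) (hr : 0 ≤ r) (hrp : r ≤ p) : Integrable (fun ω => X ω ^ r) μ := by
  have h := (hX.mono_exponent (ENNReal.ofReal_le_ofReal hrp)).integrable_norm_rpow'
  simp only [ENNReal.toReal_ofReal hr, Real.norm_eq_abs] at h
  simpa only [abs_of_nonneg (hX0 _)] using h

lemma integral_rpow_le_integral_rpow_rpow (hX : MemLp X (ENNReal.ofReal p) μ)
    (hX0 : ∀ ω, 0 ≤ X ω) (hr : 0 ≤ r) (hrp : r ≤ p) :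
    ∫ ω, X ω ^ r ∂μ ≤ (∫ ω, X ω ^ p ∂μ) ^ (r / p) := by
  rcases hr.eq_or_lt with rfl | hr
  · simp
  have hp : 0 < p := hr.trans_le hrp
  have hXr := hX.mono_exponent (ENNReal.ofReal_le_ofReal hrp)
  have h := eLpNorm_le_eLpNorm_of_exponent_le (μ := μ) (ENNReal.ofReal_le_ofReal hrp)
    hX.aestronglyMeasurable
  rw [hXr.eLpNorm_eq_integral_rpow_norm (by simpa using hr) ENNReal.ofReal_ne_top,
    hX.eLpNorm_eq_integral_rpow_norm (by simpa using hp) ENNReal.ofReal_ne_top,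
    ENNReal.toReal_ofReal hr.le, ENNReal.toReal_ofReal hp.le] at h
  simp only [Real.norm_eq_abs, abs_of_nonneg (hX0 _)] at h
  have hIr : 0 ≤ ∫ ω, X ω ^ r ∂μ := integral_nonneg fun ω => Real.rpow_nonneg (hX0 ω) r
  have hIp : 0 ≤ ∫ ω, X ω ^ p ∂μ := integral_nonneg fun ω => Real.rpow_nonneg (hX0 ω) p
  have h := Real.rpow_le_rpow (Real.rpow_nonneg hIr _)
    ((ENNReal.ofReal_le_ofReal_iff (Real.rpow_nonneg hIp _)).1 h) hr.le
  rwa [← Real.rpow_mul hIr, inv_mul_cancel₀ hr.ne', Real.rpow_one, ← Real.rpow_mul hIp,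
    inv_mul_eq_div] at h

end Moments

section SumsOfIndependent

variable {Ω ι : Type*} [MeasurableSpace Ω] {μ : Measure Ω} [Fintype ι] {X : ι → Ω → ℝ} {p : ℝ}

lemma ProbabilityTheory.iIndepFun.indepFun_rpow_sum_erase [DecidableEq ι] (hind : iIndepFun X μ)
    (hXm : ∀ k, Measurable (X k)) (k : ι) (q : ℝ) :
    IndepFun (X k) (fun ω => (∑ j ∈ univ.erase k, X j ω) ^ q) μ := by
  have h := (hind.indepFun_finsetSum_of_notMem hXm (notMem_erase k univ)).symm
  have hpow : Measurable fun x : ℝ => x ^ q := by fun_prop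
  simpa only [Function.comp_def, Finset.sum_apply, id] using h.comp measurable_id hpow

variable [IsProbabilityMeasure μ]

lemma sum_integral_le_integral_rpow_sum_rpow_one_div (hp : 1 ≤ p)
    (hX : ∀ k, MemLp (X k) (ENNReal.ofReal p) μ) (hX0 : ∀ k ω, 0 ≤ X k ω) :
    ∑ k, ∫ ω, X k ω ∂μ ≤ (∫ ω, (∑ k, X k ω) ^ p ∂μ) ^ (1 / p) := by
  have h := integral_rpow_le_integral_rpow_rpow (memLp_finsetSum univ fun k _ => hX k)
    (fun ω => sum_nonneg fun k _ => hX0 k ω) zero_le_one hp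
  rw [← integral_finsetSum _ fun k _ => (hX k).integrable (ENNReal.one_le_ofReal.2 hp)]
  simpa only [Real.rpow_one] using h

lemma sum_integral_rpow_le_integral_rpow_sum (hp : 1 ≤ p)
    (hX : ∀ k, MemLp (X k) (ENNReal.ofReal p) μ) (hX0 : ∀ k ω, 0 ≤ X k ω) :
    ∑ k, ∫ ω, X k ω ^ p ∂μ ≤ ∫ ω, (∑ k, X k ω) ^ p ∂μ := by
  have hp0 : 0 ≤ p := zero_le_one.trans hp
  have hXp k := (hX k).integrable_rpow_of_le (hX0 k) hp0 le_rfl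
  rw [← integral_finsetSum _ fun k _ => hXp k]
  exact integral_mono (integrable_finsetSum _ fun k _ => hXp k)
    ((memLp_finsetSum univ fun k _ => hX k).integrable_rpow_of_le
      (fun ω => sum_nonneg fun k _ => hX0 k ω) hp0 le_rfl)
    fun ω => Real.sum_rpow_le_rpow_sum univ (fun k _ => hX0 k ω) hp

variable [DecidableEq ι]

lemma integral_rpow_sum_le_of_iIndepFun (hp : 1 ≤ p) (hind : iIndepFun X μ)
    (hXm : ∀ k, Measurable (X k)) (hX : ∀ k, MemLp (X k) (ENNReal.ofReal p) μ)
    (hX0 : ∀ k ω, 0 ≤ X k ω) :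
    ∫ ω, (∑ k, X k ω) ^ p ∂μ ≤
      2 ^ (p - 1) * ((∑ k, ∫ ω, X k ω ∂μ) * (∫ ω, (∑ k, X k ω) ^ p ∂μ) ^ ((p - 1) / p)
        + ∑ k, ∫ ω, X k ω ^ p ∂μ) := by
  have hp0 : 0 ≤ p := zero_le_one.trans hp
  have hq : 0 ≤ p - 1 := by linarith
  have hSum (s : Finset ι) : MemLp (fun ω => ∑ j ∈ s, X j ω) (ENNReal.ofReal p) μ :=
    memLp_finsetSum s fun k _ => hX k
  have hSum0 (s : Finset ι) ω : 0 ≤ ∑ j ∈ s, X j ω := sum_nonneg fun j _ => hX0 j ω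
  have hXint k := (hX k).integrable (ENNReal.one_le_ofReal.2 hp)
  have hXp k := (hX k).integrable_rpow_of_le (hX0 k) hp0 le_rfl
  have hRest k := (hSum (univ.erase k)).integrable_rpow_of_le (hSum0 _) hq (by linarith)
  have hprod k : Integrable (fun ω => X k ω * (∑ j ∈ univ.erase k, X j ω) ^ (p - 1)) μ :=
    (hind.indepFun_rpow_sum_erase hXm k (p - 1)).integrable_mul (hXint k) (hRest k)
  have hterm k : Integrable
      (fun ω => X k ω * (∑ j ∈ univ.erase k, X j ω) ^ (p - 1) + X k ω ^ p) μ :=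
    (hprod k).add (hXp k)
  have hRest_le k : ∫ ω, (∑ j ∈ univ.erase k, X j ω) ^ (p - 1) ∂μ ≤
      (∫ ω, (∑ j, X j ω) ^ p ∂μ) ^ ((p - 1) / p) := by
    refine (integral_rpow_le_integral_rpow_rpow (hSum _) (hSum0 _) hq (by linarith)).trans ?_
    refine Real.rpow_le_rpow (integral_nonneg fun ω => Real.rpow_nonneg (hSum0 _ ω) p)
      (integral_mono ((hSum _).integrable_rpow_of_le (hSum0 _) hp0 le_rfl)
        ((hSum _).integrable_rpow_of_le (hSum0 _) hp0 le_rfl) fun ω => ?_) (by positivity)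
    exact Real.rpow_le_rpow (hSum0 _ ω)
      (sum_le_sum_of_subset_of_nonneg (erase_subset k univ) fun j _ _ => hX0 j ω) hp0
  calc ∫ ω, (∑ k, X k ω) ^ p ∂μ
      ≤ ∫ ω, 2 ^ (p - 1) *
          ∑ k, (X k ω * (∑ j ∈ univ.erase k, X j ω) ^ (p - 1) + X k ω ^ p) ∂μ :=
        integral_mono ((hSum univ).integrable_rpow_of_le (hSum0 _) hp0 le_rfl)
          ((integrable_finsetSum _ fun k _ => hterm k).const_mul _)
          fun ω => Real.rpow_sum_le_two_rpow_mul_sum_erase (fun k => hX0 k ω) hp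
    _ = 2 ^ (p - 1) * ∑ k, ((∫ ω, X k ω ∂μ) *
          ∫ ω, (∑ j ∈ univ.erase k, X j ω) ^ (p - 1) ∂μ + ∫ ω, X k ω ^ p ∂μ) := by
        rw [integral_const_mul, integral_finsetSum _ fun k _ => hterm k]
        congr 1
        refine sum_congr rfl fun k _ => ?_
        rw [integral_add (hprod k) (hXp k), (hind.indepFun_rpow_sum_erase hXm k (p - 1)
          ).integral_fun_mul_eq_mul_integral
          (hXint k).aestronglyMeasurable (hRest k).aestronglyMeasurable]
    _ ≤ 2 ^ (p - 1) * ((∑ k, ∫ ω, X k ω ∂μ) * (∫ ω, (∑ k, X k ω) ^ p ∂μ) ^ ((p - 1) / p)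
          + ∑ k, ∫ ω, X k ω ^ p ∂μ) := by
        rw [sum_add_distrib, sum_mul]
        gcongr with k
        · exact integral_nonneg (hX0 k)
        · exact hRest_le k

lemma integral_rpow_sum_rpow_one_div_le_of_iIndepFun (hp : 1 ≤ p) (hind : iIndepFun X μ)
    (hXm : ∀ k, Measurable (X k)) (hX : ∀ k, MemLp (X k) (ENNReal.ofReal p) μ)
    (hX0 : ∀ k ω, 0 ≤ X k ω) :
    (∫ ω, (∑ k, X k ω) ^ p ∂μ) ^ (1 / p) ≤
      2 ^ p * max (∑ k, ∫ ω, X k ω ∂μ) ((∑ k, ∫ ω, X k ω ^ p ∂μ) ^ (1 / p)) := by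
  have hI : 0 ≤ ∫ ω, (∑ k, X k ω) ^ p ∂μ :=
    integral_nonneg fun ω => Real.rpow_nonneg (sum_nonneg fun k _ => hX0 k ω) p
  refine Real.le_two_rpow_mul_max_of_rpow_le hp (Real.rpow_nonneg hI _)
    (sum_nonneg fun k _ => integral_nonneg (hX0 k))
    (sum_nonneg fun k _ => integral_nonneg fun ω => Real.rpow_nonneg (hX0 k ω) p) ?_
  rw [← Real.rpow_mul hI, one_div_mul_cancel (by positivity), Real.rpow_one, ← Real.rpow_mul hI,
    one_div_mul_eq_div]
  exact integral_rpow_sum_le_of_iIndepFun hp hind hXm hX hX0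

end SumsOfIndependent

/-- Noncommutative paper, classical motivating fact (Σ_p): for independent real random
variables `f₁,…,f_n` on a probability space and `1 ≤ p < ∞`, the `L_p` norm of
`∑ |f_k|` is equivalent, with constants depending only on `p`, to
`max (∑ ∫|f_k|, (∑ ∫|f_k|^p)^{1/p})`. -/
theorem stmt_0 (p : ℝ) (hp : 1 ≤ p) :
    ∃ c C : ℝ, 0 < c ∧ c ≤ C ∧
      ∀ (Ω : Type) (_ : MeasurableSpace Ω) (μ : Measure Ω), IsProbabilityMeasure μ →
      ∀ (n : ℕ) (f : Fin n → Ω → ℝ),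
        (∀ k, Measurable (f k)) →
        iIndepFun f μ →
        (∀ k, MemLp (f k) (ENNReal.ofReal p) μ) →
        c * max (∑ k, ∫ ω, |f k ω| ∂μ) ((∑ k, ∫ ω, |f k ω| ^ p ∂μ) ^ (1 / p))
            ≤ (∫ ω, (∑ k, |f k ω|) ^ p ∂μ) ^ (1 / p) ∧
          (∫ ω, (∑ k, |f k ω|) ^ p ∂μ) ^ (1 / p)
            ≤ C * max (∑ k, ∫ ω, |f k ω| ∂μ) ((∑ k, ∫ ω, |f k ω| ^ p ∂μ) ^ (1 / p)) := by
  refine ⟨1, 2 ^ p, one_pos, Real.one_le_rpow one_le_two (by linarith), ?_⟩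
  intro Ω _ μ _ n f hfm hind hf
  have hXm k : Measurable fun ω => |f k ω| := (hfm k).abs
  have hXind : iIndepFun (fun k ω => |f k ω|) μ := hind.comp _ fun _ => measurable_abs
  have hX k : MemLp (fun ω => |f k ω|) (ENNReal.ofReal p) μ := (hf k).abs
  have hX0 k ω : 0 ≤ |f k ω| := abs_nonneg _
  rw [one_mul]
  refine ⟨max_le (sum_integral_le_integral_rpow_sum_rpow_one_div hp hX hX0) ?_,
    integral_rpow_sum_rpow_one_div_le_of_iIndepFun hp hXind hXm hX hX0⟩
  gcongr
  exact sum_integral_rpow_le_integral_rpow_sum hp hX hX0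
end

section
/- Let $E$ be a Banach space, $2 \le q < \infty$, and suppose the Schatten class $S_1(\ell_2 \otimes \ell_2)$ (equivalently $S_1$ of a separable Hilbert space) has cotype 2 with constant $c$. Then for any finite family $x_1, \dots, x_n$ in $S_1(S_1)$, $\Big( \sum_{k=1}^n \| x_k \|_{S_1(S_1)}^2 \Big)^{1/2} \le c \, \Big\| \Big( \sum_{k=1}^n x_k^* x_k \Big)^{1/2} \Big\|_{S_1(S_1)}$, where $x_k^* x_k$ is computed viewing $x_k$ as operators. -/
open scoped ENNReal BigOperators ComplexOrder
open Matrix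

noncomputable def ctmEig {m n : Type*} [Fintype m] [Fintype n] [DecidableEq n]
    (a : Matrix m n ℂ) : n → ℝ :=
  (Matrix.posSemidef_conjTranspose_mul_self a).isHermitian.eigenvalues

/-- Schatten `p`-norm of a (rectangular) complex matrix; `p = ∞` is the operator norm. -/
noncomputable def schNorm {m n : Type*} [Fintype m] [Fintype n] [DecidableEq n]
    (p : ℝ≥0∞) (a : Matrix m n ℂ) : ℝ :=
  if p = ∞ then ⨆ j, Real.sqrt (ctmEig a j)
  else (∑ j, ctmEig a j ^ (p.toReal / 2)) ^ (1 / p.toReal)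

/-!
The trace norm of `a` depends only on `aᴴ * a` and is invariant under multiplication by
isometries on either side. Put `x k` in the `(k, ∗)` block of a larger matrix, all in one fixed
block column `∗`: the resulting `y k` have `‖y k‖₁ = ‖x k‖₁` and pairwise orthogonal ranges, so
for every choice of signs `(∑ ± y k)ᴴ (∑ ± y k)` is `∑ (x k)ᴴ x k = sᴴ s` placed in the `(∗, ∗)`
block. Hence every signed sum has trace norm `‖s‖₁`, and cotype 2 applied to the `y k` gives
the estimate.
-/

open scoped MatrixOrder

section SchattenOne
variable {m m' n p : Type*} [Fintype m] [Fintype m'] [Fintype n] [Fintype p]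
  [DecidableEq n] [DecidableEq p]

lemma ctmEig_eq_of_conjTranspose_mul_self_eq {a : Matrix m n ℂ} {b : Matrix m' n ℂ}
    (h : aᴴ * a = bᴴ * b) : ctmEig a = ctmEig b := by
  have key : ∀ {A B : Matrix n n ℂ} (hA : A.IsHermitian) (hB : B.IsHermitian),
      A = B → hA.eigenvalues = hB.eigenvalues := by
    rintro A _ hA hB rfl
    rfl
  exact key _ _ h

lemma schNorm_eq_of_conjTranspose_mul_self_eq (q : ℝ≥0∞) {a : Matrix m n ℂ} {b : Matrix m' n ℂ}
    (h : aᴴ * a = bᴴ * b) : schNorm q a = schNorm q b := by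
  simp only [schNorm, ctmEig_eq_of_conjTranspose_mul_self_eq h]

lemma schNorm_mul_of_conjTranspose_mul_self_eq_one [DecidableEq m] (q : ℝ≥0∞) {W : Matrix m' m ℂ}
    (hW : Wᴴ * W = 1) (a : Matrix m n ℂ) : schNorm q (W * a) = schNorm q a :=
  schNorm_eq_of_conjTranspose_mul_self_eq q <| by
    rw [conjTranspose_mul, Matrix.mul_assoc, ← Matrix.mul_assoc Wᴴ, hW, Matrix.one_mul]

lemma schNorm_one_eq_re_trace_sqrt (a : Matrix m n ℂ) :
    schNorm 1 a = (CFC.sqrt (aᴴ * a)).trace.re := by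
  have ha := Matrix.posSemidef_conjTranspose_mul_self a
  rw [schNorm, if_neg ENNReal.one_ne_top, ENNReal.toReal_one, div_one, Real.rpow_one,
    CFC.sqrt_eq_cfc, cfc_nnreal_eq_real _ (aᴴ * a), ha.1.cfc_eq]
  simp only [IsHermitian.cfc, Unitary.conjStarAlgAut_apply, Matrix.trace_mul_cycle,
    Unitary.coe_star_mul_self, Matrix.one_mul, Matrix.trace_diagonal, Complex.re_sum]
  refine Finset.sum_congr rfl fun j _ => ?_
  simp [ctmEig, Real.sqrt_eq_rpow, max_eq_left (ha.eigenvalues_nonneg j)]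

lemma CFC.sqrt_conjTranspose_mul_mul {V : Matrix n p ℂ} (hV : V * Vᴴ = 1) {A : Matrix n n ℂ}
    (hA : 0 ≤ A) : CFC.sqrt (Vᴴ * A * V) = Vᴴ * CFC.sqrt A * V := by
  refine CFC.sqrt_unique ?_ ((CFC.sqrt_nonneg A).posSemidef.conjTranspose_mul_mul_same V).nonneg
  calc Vᴴ * CFC.sqrt A * V * (Vᴴ * CFC.sqrt A * V)
      = Vᴴ * (CFC.sqrt A * (V * Vᴴ) * CFC.sqrt A) * V := by simp only [Matrix.mul_assoc]
    _ = Vᴴ * A * V := by rw [hV, Matrix.mul_one, CFC.sqrt_mul_sqrt_self A hA]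

lemma schNorm_one_mul_of_mul_conjTranspose_eq_one {V : Matrix n p ℂ} (hV : V * Vᴴ = 1)
    (a : Matrix m n ℂ) : schNorm 1 (a * V) = schNorm 1 a := by
  rw [schNorm_one_eq_re_trace_sqrt, schNorm_one_eq_re_trace_sqrt, conjTranspose_mul,
    Matrix.mul_assoc, ← Matrix.mul_assoc aᴴ, ← Matrix.mul_assoc Vᴴ,
    CFC.sqrt_conjTranspose_mul_mul hV (Matrix.posSemidef_conjTranspose_mul_self a).nonneg,
    Matrix.trace_mul_cycle, hV, Matrix.one_mul]

end SchattenOne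

section BlockSelector
variable {R P ι κ : Type*} [Semiring R] [StarRing R] [Fintype P] [DecidableEq P] [Fintype ι]
  [DecidableEq ι] [Fintype κ]

def blockSelector (R : Type*) [Zero R] [One R] (e : κ ≃ P × ι) (j : ι) : Matrix P κ R :=
  (1 : Matrix (P × ι) (P × ι) R).submatrix (fun r => (r, j)) e

lemma blockSelector_mul_conjTranspose (e : κ ≃ P × ι) (j j' : ι) :
    blockSelector R e j * (blockSelector R e j')ᴴ = if j = j' then 1 else 0 := by
  rw [blockSelector, blockSelector, conjTranspose_submatrix, submatrix_mul_equiv,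
    conjTranspose_one, Matrix.one_mul]
  split_ifs with h
  · subst h
    exact submatrix_one _ fun r r' h => (Prod.mk.inj h).1
  · ext r r'
    simp [one_apply, h]

lemma blockSelector_mul_conjTranspose_self (e : κ ≃ P × ι) (j : ι) :
    blockSelector R e j * (blockSelector R e j)ᴴ = 1 :=
  (blockSelector_mul_conjTranspose e j j).trans (if_pos rfl)

end BlockSelector

section BlockEmbed
variable {P ι κ : Type*} [Fintype P] [DecidableEq P] [Fintype ι] [DecidableEq ι] [Fintype κ]
  (e : κ ≃ P × Option ι)

/-- `a` sits in block row `some k` and block column `none`. -/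
noncomputable def blockEmbed (k : ι) (a : Matrix P P ℂ) : Matrix κ κ ℂ :=
  (blockSelector ℂ e (some k))ᴴ * a * blockSelector ℂ e none

lemma conjTranspose_blockEmbed_mul_blockEmbed (k k' : ι) (a b : Matrix P P ℂ) :
    (blockEmbed e k a)ᴴ * blockEmbed e k' b =
      if k = k' then (blockSelector ℂ e none)ᴴ * (aᴴ * b) * blockSelector ℂ e none else 0 := by
  simp only [blockEmbed, conjTranspose_mul, conjTranspose_conjTranspose, Matrix.mul_assoc]
  rw [← Matrix.mul_assoc (blockSelector ℂ e (some k)), blockSelector_mul_conjTranspose]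
  by_cases h : k = k' <;> simp [h]

lemma schNorm_one_blockEmbed [DecidableEq κ] (k : ι) (a : Matrix P P ℂ) :
    schNorm 1 (blockEmbed e k a) = schNorm 1 a := by
  rw [blockEmbed, schNorm_one_mul_of_mul_conjTranspose_eq_one
      (blockSelector_mul_conjTranspose_self e none), schNorm_mul_of_conjTranspose_mul_self_eq_one 1
      (by rw [conjTranspose_conjTranspose, blockSelector_mul_conjTranspose_self])]

lemma schNorm_one_sum_smul_blockEmbed [DecidableEq κ] (x : ι → Matrix P P ℂ) (c : ι → ℂ)
    (hc : ∀ k, star (c k) * c k = 1) (s : Matrix P P ℂ) (hs : sᴴ * s = ∑ k, (x k)ᴴ * x k) :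
    schNorm 1 (∑ k, c k • blockEmbed e k (x k)) = schNorm 1 s := by
  have hZ : (∑ k, c k • blockEmbed e k (x k))ᴴ * ∑ k, c k • blockEmbed e k (x k)
      = (s * blockSelector ℂ e none)ᴴ * (s * blockSelector ℂ e none) := by
    simp only [conjTranspose_sum, conjTranspose_smul, Finset.sum_mul_sum, smul_mul_smul_comm,
      conjTranspose_blockEmbed_mul_blockEmbed, smul_ite, smul_zero, Finset.sum_ite_eq,
      Finset.mem_univ, if_true, hc, one_smul]
    rw [conjTranspose_mul, Matrix.mul_assoc, ← Matrix.mul_assoc sᴴ, hs, Matrix.sum_mul,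
      Matrix.mul_sum]
    simp only [Matrix.mul_assoc]
  rw [schNorm_eq_of_conjTranspose_mul_self_eq 1 hZ, schNorm_one_mul_of_mul_conjTranspose_eq_one
    (blockSelector_mul_conjTranspose_self e none)]

end BlockEmbed

/-- If the trace class (of any finite dimension, uniformly) has cotype 2 with constant `c`,
then for any finite family `x₁,…,x_n` in `S_1(S_1)` (trace class valued in trace class,
modelled on `ℓ_2(ℕ²)` and here on a product index) one has the square-function estimate
`(∑ ‖x_k‖_{S_1(S_1)}^2)^{1/2} ≤ c ‖(∑ x_k^* x_k)^{1/2}‖_{S_1(S_1)}`. -/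
theorem stmt_6 (c : ℝ)
    (hcot : ∀ (K n : ℕ) (y : Fin n → Matrix (Fin K) (Fin K) ℂ),
      (∑ k, schNorm 1 (y k) ^ 2) ^ (1/2 : ℝ)
        ≤ c * ((∑ ε : Fin n → Bool,
            schNorm 1 (∑ k, (if ε k then (1 : ℂ) else -1) • y k)) / 2 ^ n))
    (N M n : ℕ) (x : Fin n → Matrix (Fin N × Fin M) (Fin N × Fin M) ℂ)
    (s : Matrix (Fin N × Fin M) (Fin N × Fin M) ℂ) (hs : s.PosSemidef)
    (hsq : s * s = ∑ k, (x k)ᴴ * x k) :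
    (∑ k, schNorm 1 (x k) ^ 2) ^ (1/2 : ℝ) ≤ c * schNorm 1 s := by
  let e := (Fintype.equivFin ((Fin N × Fin M) × Option (Fin n))).symm
  have hsigns : ∀ ε : Fin n → Bool,
      schNorm 1 (∑ k, (if ε k then (1 : ℂ) else -1) • blockEmbed e k (x k)) = schNorm 1 s :=
    fun ε => schNorm_one_sum_smul_blockEmbed e x _ (fun k => by cases ε k <;> simp) s
      (by rw [hs.1, hsq])
  calc (∑ k, schNorm 1 (x k) ^ 2) ^ (1/2 : ℝ)
      = (∑ k, schNorm 1 (blockEmbed e k (x k)) ^ 2) ^ (1/2 : ℝ) := by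
        simp only [schNorm_one_blockEmbed]
    _ ≤ c * ((∑ ε : Fin n → Bool,
          schNorm 1 (∑ k, (if ε k then (1 : ℂ) else -1) • blockEmbed e k (x k))) / 2 ^ n) :=
        hcot _ n _
    _ = c * schNorm 1 s := by
        simp only [hsigns, Finset.sum_const, Finset.card_univ, Fintype.card_fun,
          Fintype.card_bool, Fintype.card_fin, nsmul_eq_mul]
        push_cast
        field_simp
end

section
/- Let $1 \le p < q \le 2$ and $d \ge 1$. Define $r$ by $\frac{1}{r} = \frac{1}{2}(1 - \frac{1}{p} + \frac{1}{q})$ and let $\zeta$ be a Haar-distributed random unitary in $U(d)$. Then $\Big( \mathbb{E} \, \| d \cdot \zeta^{\mathrm{t}} \|_{S_p^d}^{q'} \Big)^{1/q'} = d^{1 + 1/p}$, while the element $A = \big( \sum_{i=1}^d e_{i1} \otimes e_{i1} \big) \otimes \big( \sum_{j=1}^d e_{1j} \otimes e_{1j} \big)$ satisfies $\|A\|_{S_q^d(S_p^d)} = d^{2/r}$, where $S_q^d(S_p^d) = C_q^d \otimes_h C_p^d \otimes_h R_p^d \otimes_h R_q^d$. Consequently, any constant $K$ in the operator-space type-$q$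 inequality $\big( \mathbb{E} \| d \, \mathrm{tr}(A \zeta) \|_{S_p^d}^{q'} \big)^{1/q'} \le K \, d^{1/q} \|A\|_{S_q^d(S_p^d)}$ satisfies $K \ge d^{2(1/p - 1/q)}$. -/
open scoped ENNReal BigOperators ComplexOrder Kronecker
open Matrix

/-- The norm of Pisier's vector-valued Schatten class `S_q^N(S_p^M)` for `p ≤ q`, via the
factorization/supremum formula
`‖x‖_{S_q(S_p)} = sup { ‖(a ⊗ 1) x (b ⊗ 1)‖_{S_p} : ‖a‖_{S_{2t}}, ‖b‖_{S_{2t}} ≤ 1 }`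
where `1/p = 1/q + 1/t` (so `2t = 2pq/(q-p)`, `= ∞` when `p = q`). -/
noncomputable def sqSpNorm (q p : ℝ) {N M : ℕ}
    (x : Matrix (Fin N × Fin M) (Fin N × Fin M) ℂ) : ℝ :=
  sSup {c : ℝ | ∃ a b : Matrix (Fin N) (Fin N) ℂ,
    schNorm (if p = q then ∞ else ENNReal.ofReal (2 * p * q / (q - p))) a ≤ 1 ∧
    schNorm (if p = q then ∞ else ENNReal.ofReal (2 * p * q / (q - p))) b ≤ 1 ∧
    c = schNorm (ENNReal.ofReal p)
          ((a ⊗ₖ (1 : Matrix (Fin M) (Fin M) ℂ)) * x * (b ⊗ₖ (1 : Matrix (Fin M) (Fin M) ℂ)))}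

/-! The random part is deterministic: `ζᵗ` is unitary, so `(d ζᵗ)ᴴ (d ζᵗ) = d² • 1` and
`‖d ζᵗ‖_{S_p} = d · d^{1/p}` for every `ω`. The test element is the rank-one matrix
`vec 1 (vec 1)ᵀ`, and `(a ⊗ 1) vec 1 = vec aᵀ`, so the sandwich `(a ⊗ 1) A (b ⊗ 1)` is rank one
with `S_p`-norm `‖a‖_{S_2} ‖b‖_{S_2}`. By the power-mean inequality `‖a‖_{S_2} ≤ d^{1/2 - 1/s}`
when `‖a‖_{S_s} ≤ 1` (`s = 2pq/(q-p) ≥ 2`), with equality for `a = d^{-1/s} • 1`; hence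
`‖A‖ = d^{1 - 2/s} = d^{2/r}`. The bound on `K` is then exponent arithmetic. -/

lemma sum_rpow_eq_rpow_sum_of_card_ne_zero_le_one {ι : Type*} [Fintype ι] {f : ι → ℝ}
    (hf : Fintype.card {i // f i ≠ 0} ≤ 1) {α : ℝ} (hα : α ≠ 0) :
    ∑ i, f i ^ α = (∑ i, f i) ^ α := by
  by_cases hzero : ∀ i, f i = 0
  · simp [hzero, Real.zero_rpow hα]
  obtain ⟨i₀, hi₀⟩ := not_forall.1 hzero
  have hsupp (i : ι) (hi : i ≠ i₀) : f i = 0 := by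
    by_contra hfi
    exact hi (congrArg Subtype.val (Fintype.card_le_one_iff.1 hf ⟨i, hfi⟩ ⟨i₀, hi₀⟩))
  rw [Fintype.sum_eq_single i₀ fun i hi => by rw [hsupp i hi, Real.zero_rpow hα],
    Fintype.sum_eq_single i₀ hsupp]

section
variable {m n : Type*} [Fintype m] [Fintype n] [DecidableEq n]

lemma ctmEig_nonneg (a : Matrix m n ℂ) (j : n) : 0 ≤ ctmEig a j :=
  (posSemidef_conjTranspose_mul_self a).eigenvalues_nonneg j

lemma sum_ctmEig (a : Matrix m n ℂ) : ∑ j, ctmEig a j = ∑ i, ∑ j, ‖a i j‖ ^ 2 := by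
  have h := (posSemidef_conjTranspose_mul_self a).isHermitian.trace_eq_sum_eigenvalues
  have h2 : (aᴴ * a).trace = ((∑ i, ∑ j, ‖a i j‖ ^ 2 : ℝ) : ℂ) := by
    simp only [trace, diag, mul_apply, conjTranspose_apply]
    push_cast
    rw [Finset.sum_comm]
    simp [Complex.conj_mul']
  have h3 := congrArg Complex.re (h.symm.trans h2)
  rw [Complex.ofReal_re] at h3
  simpa [ctmEig] using h3

lemma ctmEig_of_conjTranspose_mul_self_eq {a : Matrix m n ℂ} {γ : ℝ}
    (h : aᴴ * a = (γ : ℂ) • 1) (j : n) : ctmEig a j = γ := by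
  have hH := (posSemidef_conjTranspose_mul_self a).isHermitian
  have eigen_unique (v : n → ℂ) (hv : v ≠ 0) (hav : (aᴴ * a) *ᵥ v = (ctmEig a j : ℂ) • v) :
      ctmEig a j = γ := by
    rw [h, smul_mulVec, one_mulVec] at hav
    exact_mod_cast ((smul_left_injective ℂ hv) hav).symm
  exact eigen_unique _ ((WithLp.ofLp_eq_zero 2).ne.2 <| hH.eigenvectorBasis.orthonormal.ne_zero j)
    (hH.mulVec_eigenvectorBasis j)

lemma schNorm_ofReal {p : ℝ} (hp : 0 < p) (a : Matrix m n ℂ) :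
    schNorm (ENNReal.ofReal p) a = (∑ j, ctmEig a j ^ (p / 2)) ^ (1 / p) := by
  rw [schNorm, if_neg ENNReal.ofReal_ne_top, ENNReal.toReal_ofReal hp.le]

lemma schNorm_smul_of_conjTranspose_mul_self_eq_one {p : ℝ} (hp : 0 < p) {c : ℝ} (hc : 0 ≤ c)
    {u : Matrix m n ℂ} (hu : uᴴ * u = 1) :
    schNorm (ENNReal.ofReal p) ((c : ℂ) • u) = c * Fintype.card n ^ (1 / p) := by
  have hsq : ((c : ℂ) • u)ᴴ * ((c : ℂ) • u) = ((c ^ 2 : ℝ) : ℂ) • 1 := by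
    rw [conjTranspose_smul, Matrix.smul_mul, Matrix.mul_smul, hu, smul_smul, Complex.star_def,
      Complex.conj_ofReal]
    push_cast; ring_nf
  simp only [schNorm_ofReal hp, ctmEig_of_conjTranspose_mul_self_eq hsq, Finset.sum_const,
    Finset.card_univ, nsmul_eq_mul]
  have hcp : (c ^ 2) ^ (p / 2) = c ^ p := by
    rw [← Real.rpow_natCast, ← Real.rpow_mul hc]; congr 1; ring
  rw [hcp, Real.mul_rpow (by positivity) (by positivity), one_div,
    Real.rpow_rpow_inv hc hp.ne', mul_comm]

lemma schNorm_of_rank_le_one {p : ℝ} (hp : 0 < p) {a : Matrix m n ℂ} (ha : a.rank ≤ 1) :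
    schNorm (ENNReal.ofReal p) a = √(∑ i, ∑ j, ‖a i j‖ ^ 2) := by
  have hH := (posSemidef_conjTranspose_mul_self a).isHermitian
  have hcard : Fintype.card {j // ctmEig a j ≠ 0} ≤ 1 := by
    change Fintype.card {j // hH.eigenvalues j ≠ 0} ≤ 1
    rw [← hH.rank_eq_card_non_zero_eigs, rank_conjTranspose_mul_self]; exact ha
  rw [schNorm_ofReal hp, sum_rpow_eq_rpow_sum_of_card_ne_zero_le_one hcard
    (by positivity), sum_ctmEig, ← Real.rpow_mul (by positivity), Real.sqrt_eq_rpow]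
  field_simp

lemma sum_norm_sq_le_of_schNorm_le_one {s : ℝ} (hs : 2 ≤ s) {a : Matrix m n ℂ}
    (ha : schNorm (ENNReal.ofReal s) a ≤ 1) :
    ∑ i, ∑ j, ‖a i j‖ ^ 2 ≤ Fintype.card n ^ (1 - 2 / s) := by
  rcases isEmpty_or_nonempty n with hn | hn
  · simp only [Finset.univ_eq_empty, Finset.sum_empty, Finset.sum_const_zero]
    positivity
  set N : ℝ := (Fintype.card n : ℝ)
  have hN : 0 < N := by positivity
  have heig := ctmEig_nonneg a
  set S := ∑ j, ctmEig a j ^ (s / 2)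
  have hS0 : 0 ≤ S := Finset.sum_nonneg fun j _ => Real.rpow_nonneg (heig j) _
  have hS1 : S ≤ 1 := by
    rwa [schNorm_ofReal (by linarith), one_div, Real.rpow_inv_le_iff_of_pos hS0 zero_le_one
      (by linarith), Real.one_rpow] at ha
  have hmean := Real.arith_mean_le_rpow_mean Finset.univ (fun _ => N⁻¹) (ctmEig a)
    (fun _ _ => inv_nonneg.2 hN.le) (by simp [N, hN.ne']) (fun j _ => heig j)
    (by linarith : 1 ≤ s / 2)
  rw [← Finset.mul_sum, ← Finset.mul_sum, Real.mul_rpow (inv_nonneg.2 hN.le) hS0] at hmean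
  rw [← sum_ctmEig]
  calc ∑ j, ctmEig a j ≤ N * (N⁻¹ ^ (1 / (s / 2)) * S ^ (1 / (s / 2))) := by
        rwa [← inv_mul_le_iff₀ hN]
    _ ≤ N * N⁻¹ ^ (1 / (s / 2)) := by
        gcongr
        exact mul_le_of_le_one_right (by positivity)
          (Real.rpow_le_one hS0 hS1 (by positivity))
    _ = N ^ (1 - 2 / s) := by
        rw [Real.inv_rpow hN.le, ← Real.rpow_neg hN.le, sub_eq_add_neg, Real.rpow_add hN,
          Real.rpow_one]
        congr 3
        ring
end

lemma sum_norm_sq_vec {m n : Type*} [Fintype m] [Fintype n] (a : Matrix m n ℂ) :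
    ∑ P, ‖vec a P‖ ^ 2 = ∑ i, ∑ j, ‖a i j‖ ^ 2 := by
  rw [Fintype.sum_prod_type, Finset.sum_comm]
  rfl

lemma schNorm_kronecker_one_mul_mul_kronecker_one {n : Type*} [Fintype n] [DecidableEq n]
    {p : ℝ} (hp : 0 < p) (a b : Matrix n n ℂ) :
    schNorm (ENNReal.ofReal p)
        ((a ⊗ₖ (1 : Matrix n n ℂ)) * vecMulVec (vec 1) (vec 1) * (b ⊗ₖ (1 : Matrix n n ℂ))) =
      √(∑ i, ∑ j, ‖a i j‖ ^ 2) * √(∑ i, ∑ j, ‖b i j‖ ^ 2) := by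
  rw [mul_vecMulVec, vecMulVec_mul, kronecker_mulVec_vec, vec_vecMul_kronecker,
    schNorm_of_rank_le_one hp (rank_vecMulVec_le _ _), ← Real.sqrt_mul (by positivity)]
  simp only [vecMulVec_apply, norm_mul, mul_pow, ← Finset.mul_sum, ← Finset.sum_mul,
    sum_norm_sq_vec, transpose_one, Matrix.one_mul, transpose_apply]
  rw [Finset.sum_comm (f := fun i j => ‖a j i‖ ^ 2)]

lemma of_ite_diag_eq_vecMulVec {n : Type*} [DecidableEq n] :
    (of fun P Q : n × n => if P.1 = P.2 ∧ Q.1 = Q.2 then (1 : ℂ) else 0) =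
      vecMulVec (vec 1) (vec 1) := by
  ext P Q
  simp only [of_apply, vecMulVec_apply, vec, one_apply, ite_zero_mul_ite_zero, mul_one, eq_comm]

lemma sum_norm_sq_smul_one {n : Type*} [Fintype n] [DecidableEq n] (c : ℝ) :
    ∑ i, ∑ j, ‖((c : ℂ) • (1 : Matrix n n ℂ)) i j‖ ^ 2 = Fintype.card n * c ^ 2 := by
  simp [one_apply, apply_ite]

lemma sqSpNorm_vecMulVec_vec_one {p q : ℝ} (hp : 1 ≤ p) (hpq : p < q) {d : ℕ} (hd : 0 < d) :
    sqSpNorm q p (vecMulVec (vec (1 : Matrix (Fin d) (Fin d) ℂ)) (vec 1)) =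
      (d : ℝ) ^ (1 - 1 / p + 1 / q) := by
  set s := 2 * p * q / (q - p)
  have hs : 2 ≤ s := by
    rw [le_div_iff₀ (by linarith)]; nlinarith
  have hexp : 1 - 1 / p + 1 / q = 1 - 2 / s := by
    have : q - p ≠ 0 := by linarith
    have : p ≠ 0 := by linarith
    have : q ≠ 0 := by linarith
    simp only [s]
    field_simp
    ring
  have hdR : (0 : ℝ) < d := by exact_mod_cast hd
  rw [sqSpNorm, if_neg hpq.ne, hexp]
  refine IsGreatest.csSup_eq ⟨?_, ?_⟩
  · set c : ℝ := (d : ℝ) ^ (-(1 / s))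
    have hc : 0 ≤ c := by positivity
    have hnorm : schNorm (ENNReal.ofReal s) ((c : ℂ) • (1 : Matrix (Fin d) (Fin d) ℂ)) ≤ 1 := by
      rw [schNorm_smul_of_conjTranspose_mul_self_eq_one (by linarith) hc (by simp),
        Fintype.card_fin, ← Real.rpow_add hdR, neg_add_cancel, Real.rpow_zero]
    refine ⟨_, _, hnorm, hnorm, ?_⟩
    rw [schNorm_kronecker_one_mul_mul_kronecker_one (by linarith),
      Real.mul_self_sqrt (by positivity), sum_norm_sq_smul_one, Fintype.card_fin,
      ← Real.rpow_natCast c 2, ← Real.rpow_mul hdR.le, sub_eq_add_neg, Real.rpow_add hdR,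
      Real.rpow_one]
    congr 2
    push_cast
    ring
  · rintro x ⟨a, b, ha, hb, rfl⟩
    rw [schNorm_kronecker_one_mul_mul_kronecker_one (by linarith)]
    have hsq := Real.sqrt_le_sqrt (sum_norm_sq_le_of_schNorm_le_one hs ha)
    have hsq' := Real.sqrt_le_sqrt (sum_norm_sq_le_of_schNorm_le_one hs hb)
    rw [Fintype.card_fin] at hsq hsq'
    calc _ ≤ √((d : ℝ) ^ (1 - 2 / s)) * √((d : ℝ) ^ (1 - 2 / s)) :=
          mul_le_mul hsq hsq' (Real.sqrt_nonneg _) (Real.sqrt_nonneg _)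
      _ = (d : ℝ) ^ (1 - 2 / s) := Real.mul_self_sqrt (by positivity)

open MeasureTheory in
theorem stmt_14_general (p q q' r : ℝ) (hp : 1 ≤ p) (hpq : p < q)
    (hq' : 1/q + 1/q' = 1) (hr : 1/r = (1 - 1/p + 1/q) / 2)
    (d : ℕ) (hd : 0 < d) (Ω : Type) [MeasurableSpace Ω] (μ : Measure Ω)
    [IsProbabilityMeasure μ] (ζ : Ω → Matrix (Fin d) (Fin d) ℂ)
    (hunit : ∀ ω, (ζ ω)ᴴ * ζ ω = 1 ∧ ζ ω * (ζ ω)ᴴ = 1) :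
    ((∫ ω, schNorm (ENNReal.ofReal p) ((d : ℂ) • (ζ ω)ᵀ) ^ q' ∂μ) ^ (1/q')
        = (d : ℝ) ^ (1 + 1/p)) ∧
    sqSpNorm q p (Matrix.of fun P Q : Fin d × Fin d =>
        if P.1 = P.2 ∧ Q.1 = Q.2 then (1 : ℂ) else 0) = (d : ℝ) ^ (2/r) ∧
    (∀ K : ℝ,
      (∫ ω, schNorm (ENNReal.ofReal p) ((d : ℂ) • (ζ ω)ᵀ) ^ q' ∂μ) ^ (1/q')
          ≤ K * (d : ℝ) ^ (1/q) *
            sqSpNorm q p (Matrix.of fun P Q : Fin d × Fin d =>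
              if P.1 = P.2 ∧ Q.1 = Q.2 then (1 : ℂ) else 0) →
      (d : ℝ) ^ (2 * (1/p - 1/q)) ≤ K) := by
  have hdR : (0 : ℝ) < d := by exact_mod_cast hd
  have hq'0 : q' ≠ 0 := by
    have : 1 / q < 1 := (div_lt_one (by linarith)).2 (by linarith)
    exact (one_div_pos.1 (by linarith : 0 < 1 / q')).ne'
  have h2r : 2 / r = 1 - 1 / p + 1 / q := by linarith [show 2 / r = 2 * (1 / r) by ring]
  have hnorm (ω : Ω) : schNorm (ENNReal.ofReal p) ((d : ℂ) • (ζ ω)ᵀ) = (d : ℝ) ^ (1 + 1 / p) := by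
    have hu : ((ζ ω)ᵀ)ᴴ * (ζ ω)ᵀ = 1 := by
      rw [show ((ζ ω)ᵀ)ᴴ = ((ζ ω)ᴴ)ᵀ from rfl, ← transpose_mul, (hunit ω).2, transpose_one]
    rw [← Complex.ofReal_natCast, schNorm_smul_of_conjTranspose_mul_self_eq_one (by linarith)
      hdR.le hu, Fintype.card_fin, Real.rpow_add hdR, Real.rpow_one]
  have hmoment : (∫ ω, schNorm (ENNReal.ofReal p) ((d : ℂ) • (ζ ω)ᵀ) ^ q' ∂μ) ^ (1 / q') =
      (d : ℝ) ^ (1 + 1 / p) := by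
    simp only [hnorm, integral_const, probReal_univ, one_smul]
    rw [one_div q', Real.rpow_rpow_inv (by positivity) hq'0]
  have hA : sqSpNorm q p (of fun P Q : Fin d × Fin d =>
      if P.1 = P.2 ∧ Q.1 = Q.2 then (1 : ℂ) else 0) = (d : ℝ) ^ (2 / r) := by
    rw [of_ite_diag_eq_vecMulVec, sqSpNorm_vecMulVec_vec_one hp hpq hd, h2r]
  refine ⟨hmoment, hA, fun K hK => ?_⟩
  rw [hmoment, hA, mul_assoc] at hK
  have hsplit : (d : ℝ) ^ (1 + 1 / p) =
      (d : ℝ) ^ (2 * (1 / p - 1 / q)) * ((d : ℝ) ^ (1 / q) * (d : ℝ) ^ (2 / r)) := by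
    rw [← Real.rpow_add hdR, ← Real.rpow_add hdR, h2r]
    ring_nf
  rw [hsplit] at hK
  exact le_of_mul_le_mul_right hK (by positivity)

open MeasureTheory in
/-- For `1 ≤ p < q ≤ 2`, `1/r = (1 - 1/p + 1/q)/2` and a Haar random unitary `ζ ∈ U(d)`:
`(𝔼 ‖d ζᵗ‖_{S_p^d}^{q'})^{1/q'} = d^{1+1/p}`, the test element
`A = (∑ e_{i1}⊗e_{i1}) ⊗ (∑ e_{1j}⊗e_{1j})` has `‖A‖_{S_q^d(S_p^d)} = d^{2/r}`, and
hence any constant `K` in the operator-space type-`q` inequality satisfies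
`K ≥ d^{2(1/p - 1/q)}`. -/
theorem stmt_14 (p q q' r : ℝ) (hp : 1 ≤ p) (hpq : p < q) (hq : q ≤ 2)
    (hq' : 1/q + 1/q' = 1) (hr : 1/r = (1 - 1/p + 1/q) / 2)
    (d : ℕ) (hd : 0 < d) (Ω : Type) [MeasurableSpace Ω] (μ : Measure Ω)
    [IsProbabilityMeasure μ] (ζ : Ω → Matrix (Fin d) (Fin d) ℂ)
    (hmeas : ∀ i j, Measurable fun ω => ζ ω i j)
    (hunit : ∀ ω, (ζ ω)ᴴ * ζ ω = 1 ∧ ζ ω * (ζ ω)ᴴ = 1) :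
    ((∫ ω, schNorm (ENNReal.ofReal p) ((d : ℂ) • (ζ ω)ᵀ) ^ q' ∂μ) ^ (1/q')
        = (d : ℝ) ^ (1 + 1/p)) ∧
    sqSpNorm q p (Matrix.of fun P Q : Fin d × Fin d =>
        if P.1 = P.2 ∧ Q.1 = Q.2 then (1 : ℂ) else 0) = (d : ℝ) ^ (2/r) ∧
    (∀ K : ℝ,
      (∫ ω, schNorm (ENNReal.ofReal p) ((d : ℂ) • (ζ ω)ᵀ) ^ q' ∂μ) ^ (1/q')
          ≤ K * (d : ℝ) ^ (1/q) *
            sqSpNorm q p (Matrix.of fun P Q : Fin d × Fin d =>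
              if P.1 = P.2 ∧ Q.1 = Q.2 then (1 : ℂ) else 0) →
      (d : ℝ) ^ (2 * (1/p - 1/q)) ≤ K) :=
  stmt_14_general p q q' r hp hpq hq' hr d hd Ω μ ζ hunit
end

section
/- Let $E$ be an operator space realized in $\mathcal{B}(\mathcal{H})$. The diagonal evaluation map $\mathrm{D}: S_1^n(\ell_\infty^n(E)) \to \ell_1^n(E)$ defined by $\mathrm{D}\big( \sum_{i,j=1}^n e_{ij} \otimes x_{ij} \big) = \sum_{k=1}^n \delta_k \otimes x_{kk}^k$, where $x_{ij}^k \in E$ denotes the $k$-th coordinate of $x_{ij} \in \ell_\infty^n(E)$, is a complete contraction. -/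
open scoped ENNReal BigOperators ComplexOrder
open Matrix

/-- Multiplication of a scalar matrix against a matrix with entries in a module. -/
def mulCME {ι κ lam : Type*} [Fintype κ] {M : Type*} [AddCommMonoid M] [Module ℂ M]
    (a : Matrix ι κ ℂ) (x : Matrix κ lam M) : Matrix ι lam M :=
  Matrix.of fun i j => ∑ k, a i k • x k j

/-- Multiplication of a module-valued matrix by a scalar matrix on the right. -/
def mulMEC {ι κ lam : Type*} [Fintype κ] {M : Type*} [AddCommMonoid M] [Module ℂ M]
    (x : Matrix ι κ M) (b : Matrix κ lam ℂ) : Matrix ι lam M :=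
  Matrix.of fun i j => ∑ k, b k j • x i k

/-- An (abstract) operator space structure on a complex vector space `E`: a family of
seminorms on all rectangular matrices over `E` satisfying Ruan's axioms. -/
structure OpSpace (E : Type) [AddCommGroup E] [Module ℂ E] : Type 1 where
  N : ∀ (ι κ : Type) [Fintype ι] [DecidableEq ι] [Fintype κ] [DecidableEq κ],
        Matrix ι κ E → ℝ
  nonneg : ∀ (ι κ : Type) [Fintype ι] [DecidableEq ι] [Fintype κ] [DecidableEq κ]
      (x : Matrix ι κ E), 0 ≤ N ι κ x
  norm_zero : ∀ (ι κ : Type) [Fintype ι] [DecidableEq ι] [Fintype κ] [DecidableEq κ],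
      N ι κ 0 = 0
  triangle : ∀ (ι κ : Type) [Fintype ι] [DecidableEq ι] [Fintype κ] [DecidableEq κ]
      (x y : Matrix ι κ E), N ι κ (x + y) ≤ N ι κ x + N ι κ y
  ruan_mul : ∀ (ι ι' κ κ' : Type) [Fintype ι] [DecidableEq ι] [Fintype ι'] [DecidableEq ι']
      [Fintype κ] [DecidableEq κ] [Fintype κ'] [DecidableEq κ']
      (a : Matrix ι' ι ℂ) (x : Matrix ι κ E) (b : Matrix κ κ' ℂ),
      N ι' κ' (mulCME a (mulMEC x b)) ≤ schNorm ⊤ a * N ι κ x * schNorm ⊤ b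
  ruan_dsum : ∀ (ι ι' κ κ' : Type) [Fintype ι] [DecidableEq ι] [Fintype ι'] [DecidableEq ι']
      [Fintype κ] [DecidableEq κ] [Fintype κ'] [DecidableEq κ']
      (x : Matrix ι κ E) (y : Matrix ι' κ' E),
      N (ι ⊕ ι') (κ ⊕ κ') (Matrix.fromBlocks x 0 0 y) ≤ max (N ι κ x) (N ι' κ' y)

variable {E : Type} [AddCommGroup E] [Module ℂ E]

/-- A linear map `u : E → M_L(ℂ)` is a complete contraction (w.r.t. the operator space
structure `os` on `E` and the operator norms on scalar matrices). -/
def CompleteContr (os : OpSpace E) {L : ℕ} (u : E →ₗ[ℂ] Matrix (Fin L) (Fin L) ℂ) : Prop :=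
  ∀ (ι κ : Type) [Fintype ι] [DecidableEq ι] [Fintype κ] [DecidableEq κ]
    (z : Matrix ι κ E),
    schNorm ⊤ (Matrix.of fun (P : ι × Fin L) (Q : κ × Fin L) => u (z P.1 Q.1) P.2 Q.2)
      ≤ os.N ι κ z

/-- The matrix norms of `ℓ_1^n(E)` (operator space `ℓ_1`-direct sum), described through
its universal property: the norm of `x ∈ M_{ι,κ}(ℓ_1^n(E))` is the supremum of
`‖∑_k (u_k)_{ι,κ}(x^k)‖` over all `n`-tuples of complete contractions `u_k : E → M_L`. -/
noncomputable def l1N (os : OpSpace E) {n : ℕ} (ι κ : Type)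
    [Fintype ι] [DecidableEq ι] [Fintype κ] [DecidableEq κ]
    (x : Matrix ι κ (Fin n → E)) : ℝ :=
  sSup {t : ℝ | ∃ (L : ℕ) (u : Fin n → (E →ₗ[ℂ] Matrix (Fin L) (Fin L) ℂ)),
    (∀ k, CompleteContr os (u k)) ∧
    t = schNorm ⊤ (Matrix.of fun (P : ι × Fin L) (Q : κ × Fin L) =>
          ∑ k, u k (x P.1 Q.1 k) P.2 Q.2)}

/-- The matrix norms of Pisier's vector-valued trace class `S_1^n(ℓ_∞^n(E))` at level
`M_K`: an element `z ∈ M_K ⊗ S_1^n ⊗ ℓ_∞^n(E)` has norm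
`inf { ‖α‖ ‖w‖_{M_L(ℓ_∞^n(E))} ‖β‖ }` over factorizations
`z_{(P,i),(Q,j)} = ∑_{l,l'} α_{P,(i,l)} β_{(j,l'),Q} · w_{l,l'}`, where
`‖w‖_{M_L(ℓ_∞^n(E))} = max_k` of the `os`-norm of the `k`-th coordinate matrix. -/
noncomputable def s1LinfN (os : OpSpace E) {K n : ℕ}
    (z : Matrix (Fin K × Fin n) (Fin K × Fin n) (Fin n → E)) : ℝ :=
  sInf {t : ℝ | ∃ (L : ℕ) (α : Matrix (Fin K) (Fin n × Fin L) ℂ)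
      (w : Matrix (Fin L) (Fin L) (Fin n → E)) (β : Matrix (Fin n × Fin L) (Fin K) ℂ),
    (∀ (P Q : Fin K) (i j : Fin n),
      z (P, i) (Q, j) = ∑ l, ∑ l', (α P (i, l) * β (j, l') Q) • w l l') ∧
    t = schNorm ⊤ α *
          (⨆ k, os.N (Fin L) (Fin L) (Matrix.of fun l l' => w l l' k)) * schNorm ⊤ β}

/-!
Identify `schNorm ⊤` with the `ℓ²` operator norm. Given complete contractions `u_k : E → M_{L'}`
and a factorization `z_{(P,i),(Q,j)} = ∑_{l,l'} α_{P,(i,l)} β_{(j,l'),Q} w_{l,l'}`, the matrix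
`∑_k (u_k)_K(z^k_{(·,k),(·,k)})` equals `(α ⊗ 1) · W · (β ⊗ 1)`, where `W` is, up to a permutation
of indices, the block diagonal matrix with blocks `(u_k)_L(w^k)`. Its norm is therefore at most
`‖α‖ · max_k ‖(u_k)_L(w^k)‖ · ‖β‖ ≤ ‖α‖ · max_k ‖w^k‖_{M_L(E)} · ‖β‖`.
-/

open scoped Matrix.Norms.L2Operator

namespace Matrix

lemma blockDiagonal_mulVec_apply {R m n o : Type*} [NonUnitalNonAssocSemiring R] [Fintype n]
    [Fintype o] [DecidableEq o] (B : o → Matrix m n R) (v : n × o → R) (i : m) (k : o) :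
    (blockDiagonal B *ᵥ v) (i, k) = (B k *ᵥ fun j => v (j, k)) i := by
  simp [mulVec, dotProduct, blockDiagonal_apply, Fintype.sum_prod_type_right]

variable {𝕜 : Type*} [RCLike 𝕜] {m n o m' n' : Type*} [Fintype m] [Fintype n] [Fintype o]
  [Fintype m'] [Fintype n'] [DecidableEq n] [DecidableEq n']

lemma IsHermitian.l2_opNorm_eq [DecidableEq m] {A : Matrix m m 𝕜} (hA : A.IsHermitian) :
    ‖A‖ = ‖(RCLike.ofReal ∘ hA.eigenvalues : m → 𝕜)‖ := by
  conv_lhs => rw [hA.spectral_theorem]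
  rw [Unitary.conjStarAlgAut_apply, ← Unitary.coe_star, CStarRing.norm_mul_coe_unitary,
    CStarRing.norm_coe_unitary_mul, l2_opNorm_diagonal]

lemma l2_opNorm_submatrix_equiv_le (A : Matrix m n 𝕜) (e : m' ≃ m) (f : n' ≃ n) :
    ‖A.submatrix e f‖ ≤ ‖A‖ := by
  refine ContinuousLinearMap.opNorm_le_bound _ (norm_nonneg _) fun x => ?_
  simpa [EuclideanSpace.norm_eq, submatrix_mulVec_equiv, toLpLin_apply,
    e.sum_comp (fun i ↦ ‖_‖ ^ 2), f.symm.sum_comp (fun i ↦ ‖x.ofLp i‖ ^ 2)] using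
    A.l2_opNorm_mulVec (WithLp.toLp 2 (x.ofLp ∘ f.symm))

lemma l2_opNorm_blockDiagonal_le [DecidableEq o] (B : o → Matrix m n 𝕜) {C : ℝ} (hC : 0 ≤ C)
    (hB : ∀ k, ‖B k‖ ≤ C) : ‖blockDiagonal B‖ ≤ C := by
  refine ContinuousLinearMap.opNorm_le_bound _ hC fun x => ?_
  let xk : o → EuclideanSpace 𝕜 n := fun k => WithLp.toLp 2 fun j => x (j, k)
  have hk : ∀ k, ‖(EuclideanSpace.equiv m 𝕜).symm (B k *ᵥ xk k)‖ ≤ C * ‖xk k‖ := fun k =>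
    (l2_opNorm_mulVec _ _).trans (mul_le_mul_of_nonneg_right (hB k) (norm_nonneg _))
  refine (sq_le_sq₀ (norm_nonneg _) (by positivity)).mp ?_
  calc _ = ∑ k, ‖(EuclideanSpace.equiv m 𝕜).symm (B k *ᵥ xk k)‖ ^ 2 := by
        simp only [LinearEquiv.trans_apply, LinearMap.coe_toContinuousLinearMap', toLpLin_apply,
          EuclideanSpace.norm_sq_eq, Fintype.sum_prod_type_right, blockDiagonal_mulVec_apply,
          PiLp.continuousLinearEquiv_symm_apply, xk]
    _ ≤ ∑ k, (C * ‖xk k‖) ^ 2 := by gcongr with k; exact hk k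
    _ = (C * ‖x‖) ^ 2 := by
        simp only [mul_pow, EuclideanSpace.norm_sq_eq, ← Finset.mul_sum,
          Fintype.sum_prod_type_right, xk]

end Matrix

lemma schNorm_top_eq_l2_opNorm {m n : Type*} [Fintype m] [Fintype n] [DecidableEq n]
    (a : Matrix m n ℂ) : schNorm ⊤ a = ‖a‖ := by
  have heig : ∀ j, 0 ≤ ctmEig a j := (posSemidef_conjTranspose_mul_self a).eigenvalues_nonneg
  have hsq : ‖a‖ * ‖a‖ = ‖(RCLike.ofReal ∘ ctmEig a : n → ℂ)‖ := by
    rw [← l2_opNorm_conjTranspose_mul_self,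
      (posSemidef_conjTranspose_mul_self a).isHermitian.l2_opNorm_eq]
    rfl
  have hnorm : ∀ j, ‖(RCLike.ofReal ∘ ctmEig a : n → ℂ) j‖ = ctmEig a j := fun j => by
    simp [abs_of_nonneg (heig j)]
  rw [schNorm, if_pos rfl]
  apply le_antisymm
  · refine Real.iSup_le (fun j => ?_) (norm_nonneg _)
    rw [← Real.sqrt_mul_self (norm_nonneg a), hsq, ← hnorm j]
    exact Real.sqrt_le_sqrt (norm_le_pi_norm (RCLike.ofReal ∘ ctmEig a : n → ℂ) j)
  · have hs : 0 ≤ ⨆ j, Real.sqrt (ctmEig a j) := Real.iSup_nonneg fun j => Real.sqrt_nonneg _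
    refine (mul_self_le_mul_self_iff (norm_nonneg a) hs).mpr ?_
    rw [hsq]
    refine (pi_norm_le_iff_of_nonneg (mul_nonneg hs hs)).mpr fun j => ?_
    rw [hnorm, ← Real.mul_self_sqrt (heig j)]
    exact mul_self_le_mul_self (Real.sqrt_nonneg _)
      (le_ciSup (Finite.bddAbove_range fun j => Real.sqrt (ctmEig a j)) j)

lemma schNorm_top_nonneg {m n : Type*} [Fintype m] [Fintype n] [DecidableEq n]
    (a : Matrix m n ℂ) : 0 ≤ schNorm ⊤ a :=
  schNorm_top_eq_l2_opNorm a ▸ norm_nonneg a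

lemma exists_s1LinfN_factorization {V : Type*} [AddCommMonoid V] [Module ℂ V] {K n : ℕ}
    (z : Matrix (Fin K × Fin n) (Fin K × Fin n) V) :
    ∃ (L : ℕ) (α : Matrix (Fin K) (Fin n × Fin L) ℂ) (w : Matrix (Fin L) (Fin L) V)
      (β : Matrix (Fin n × Fin L) (Fin K) ℂ),
      ∀ P Q i j, z (P, i) (Q, j) = ∑ l, ∑ l', (α P (i, l) * β (j, l') Q) • w l l' := by
  let e : Fin K × Fin n ≃ Fin (K * n) := finProdFinEquiv
  refine ⟨K * n, fun P il => (1 : Matrix _ _ ℂ) (P, il.1) (e.symm il.2),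
    z.submatrix e.symm e.symm, fun jl Q => (1 : Matrix _ _ ℂ) (e.symm jl.2) (Q, jl.1),
    fun P Q i j => ?_⟩
  simp [← e.sum_comp, one_apply, ite_smul]

noncomputable def linfN (os : OpSpace E) {ι : Type} [Fintype ι] [DecidableEq ι] {n : ℕ}
    (w : Matrix ι ι (Fin n → E)) : ℝ :=
  ⨆ k, os.N ι ι (Matrix.of fun l l' => w l l' k)

lemma linfN_nonneg (os : OpSpace E) {ι : Type} [Fintype ι] [DecidableEq ι] {n : ℕ}
    (w : Matrix ι ι (Fin n → E)) : 0 ≤ linfN os w :=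
  Real.iSup_nonneg fun _ => os.nonneg _ _ _

lemma N_coord_le_linfN (os : OpSpace E) {ι : Type} [Fintype ι] [DecidableEq ι] {n : ℕ}
    (w : Matrix ι ι (Fin n → E)) (k : Fin n) :
    os.N ι ι (Matrix.of fun l l' => w l l' k) ≤ linfN os w :=
  le_ciSup (Finite.bddAbove_range fun k => os.N ι ι (Matrix.of fun l l' => w l l' k)) k

lemma diagEval_eq_mul {ι κ Λ τ : Type*} [Fintype ι] [Fintype κ] [DecidableEq κ] [Fintype Λ]
    [DecidableEq Λ] [Fintype τ] [DecidableEq τ]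
    (u : κ → (E →ₗ[ℂ] Matrix τ τ ℂ)) (z : Matrix (ι × κ) (ι × κ) (κ → E))
    (α : Matrix ι (κ × Λ) ℂ) (w : Matrix Λ Λ (κ → E)) (β : Matrix (κ × Λ) ι ℂ)
    (hz : ∀ P Q i j, z (P, i) (Q, j) = ∑ l, ∑ l', (α P (i, l) * β (j, l') Q) • w l l') :
    (Matrix.of fun (P : ι × τ) (Q : ι × τ) => ∑ k, u k (z (P.1, k) (Q.1, k) k) P.2 Q.2) =
      blockDiagonal (fun _ : τ => α) *
        (blockDiagonal fun k =>
            Matrix.of fun (P : Λ × τ) (Q : Λ × τ) => u k (w P.1 Q.1 k) P.2 Q.2).submatrix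
          ((Equiv.prodAssoc κ Λ τ).trans (Equiv.prodComm _ _))
          ((Equiv.prodAssoc κ Λ τ).trans (Equiv.prodComm _ _)) *
        blockDiagonal (fun _ : τ => β) := by
  ext ⟨P, p⟩ ⟨Q, q⟩
  simp only [hz, Finset.sum_apply, Pi.smul_apply, map_sum, map_smul, Matrix.sum_apply,
    Matrix.smul_apply, smul_eq_mul, of_apply, Equiv.coe_trans, Equiv.coe_prodComm, mul_apply,
    blockDiagonal_apply, submatrix_apply, Function.comp_apply, Equiv.prodAssoc_apply,
    Prod.swap_prod_mk, mul_ite, ite_mul, zero_mul, mul_zero, Fintype.sum_prod_type,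
    Finset.sum_ite_irrel, Finset.sum_ite_eq, Finset.mem_univ, ↓reduceIte, Finset.sum_const_zero,
    Finset.sum_ite_eq', Finset.sum_mul]
  refine Finset.sum_congr rfl fun k _ => Finset.sum_comm.trans ?_
  exact Finset.sum_congr rfl fun l _ => Finset.sum_congr rfl fun l' _ => by ring

lemma schNorm_diagEval_le (os : OpSpace E) {K n L L' : ℕ}
    {u : Fin n → (E →ₗ[ℂ] Matrix (Fin L') (Fin L') ℂ)} (hu : ∀ k, CompleteContr os (u k))
    {z : Matrix (Fin K × Fin n) (Fin K × Fin n) (Fin n → E)}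
    {α : Matrix (Fin K) (Fin n × Fin L) ℂ} {w : Matrix (Fin L) (Fin L) (Fin n → E)}
    {β : Matrix (Fin n × Fin L) (Fin K) ℂ}
    (hz : ∀ P Q i j, z (P, i) (Q, j) = ∑ l, ∑ l', (α P (i, l) * β (j, l') Q) • w l l') :
    schNorm ⊤ (Matrix.of fun (P : Fin K × Fin L') (Q : Fin K × Fin L') =>
        ∑ k, u k (z (P.1, k) (Q.1, k) k) P.2 Q.2) ≤
      schNorm ⊤ α * linfN os w * schNorm ⊤ β := by
  have hblock : ∀ k, ‖Matrix.of fun (P : Fin L × Fin L') (Q : Fin L × Fin L') =>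
      u k (w P.1 Q.1 k) P.2 Q.2‖ ≤ linfN os w := fun k => by
    rw [← schNorm_top_eq_l2_opNorm]
    exact (hu k _ _ (Matrix.of fun l l' => w l l' k)).trans (N_coord_le_linfN os w k)
  simp only [schNorm_top_eq_l2_opNorm]
  rw [diagEval_eq_mul u z α w β hz]
  refine ((l2_opNorm_mul _ _).trans
    (mul_le_mul_of_nonneg_right (l2_opNorm_mul _ _) (norm_nonneg _))).trans ?_
  gcongr ?_ * ?_ * ?_
  · exact mul_nonneg (norm_nonneg α) (linfN_nonneg os w)
  · exact l2_opNorm_blockDiagonal_le _ (norm_nonneg α) fun _ => le_rfl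
  · exact (l2_opNorm_submatrix_equiv_le _ _ _).trans
      (l2_opNorm_blockDiagonal_le _ (linfN_nonneg os w) hblock)
  · exact l2_opNorm_blockDiagonal_le _ (norm_nonneg β) fun _ => le_rfl

/-- Lemma 2.1 of the paper: the diagonal evaluation map
`D : S_1^n(ℓ_∞^n(E)) → ℓ_1^n(E)`, `D(∑ e_{ij} ⊗ x_{ij}) = ∑ δ_k ⊗ x_{kk}^k`, is a
complete contraction (stated here at every matrix level `M_K`, which is exactly
complete contractivity). -/
theorem stmt_19 (os : OpSpace E) (n K : ℕ)
    (z : Matrix (Fin K × Fin n) (Fin K × Fin n) (Fin n → E)) :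
    l1N os (Fin K) (Fin K) (Matrix.of fun P Q => fun k => z (P, k) (Q, k) k)
      ≤ s1LinfN os z := by
  -- a factorization exists, so the infimum is not the junk value `sInf ∅ = 0`
  obtain ⟨L, α, w, β, hz⟩ := exists_s1LinfN_factorization z
  rw [l1N, s1LinfN]
  refine Real.sSup_le ?_ (Real.sInf_nonneg ?_)
  · rintro t ⟨L', u, hu, rfl⟩
    refine le_csInf ⟨_, L, α, w, β, hz, rfl⟩ ?_
    rintro b ⟨L, α, w, β, hz, rfl⟩
    exact schNorm_diagEval_le os hu hz
  · rintro b ⟨L, α, w, β, -, rfl⟩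
    exact mul_nonneg (mul_nonneg (schNorm_top_nonneg α) (linfN_nonneg os w))
      (schNorm_top_nonneg β)
end
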